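/- arXiv:1703.10741 — 2 statements merged into one kernel-verified Lean document; each statement's English description precedes it below -/
import Mathlib

section
/- For any even n ≥ 4, let G be the graph on vertex set A ∪ B with A = {1, ..., n/2} and B = {n/2+1, ..., n}, consisting of a complete graph on A, a complete graph on B, and a perfect matching between A and B (vertex i matched to i + n/2). Then δ(G) = n/2 and no set of 3 vertices percolates in 3-neighbour bootstrap percolation, i.e. m(G, 3) > 3. -/
/-!
Every vertex has `n/2 - 1` neighbours in its own clique and exactly one, its partner, in the
other. A set `A` of at most three vertices meets one of the two cliques, say `H`, in at most one
vertex. Then `Hᶜ ∪ A` is closed under the 3-neighbour rule, since a vertex of `H` outside it has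
at most two infected neighbours (its partner and the point of `A ∩ H`); and it is not the whole
vertex set because `|H| = n/2 ≥ 2`.
-/

open Finset

open scoped Classical

noncomputable section

variable {V : Type*}

/-- Number of neighbours of `v` inside the set `A`. -/
def nbrsIn (G : SimpleGraph V) (A : Finset V) (v : V) : ℕ :=
  (A.filter (fun u => G.Adj v u)).card

/-- One step of the `r`-neighbour bootstrap process. -/
def bootStep [Fintype V] (G : SimpleGraph V) (r : ℕ) (A : Finset V) : Finset V :=
  A ∪ Finset.univ.filter (fun v => r ≤ nbrsIn G A v)

/-- The sets `A_t` of the `r`-neighbour bootstrap process started at `A`. -/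
def bootSeq [Fintype V] (G : SimpleGraph V) (r : ℕ) (A : Finset V) : ℕ → Finset V
  | 0 => A
  | t + 1 => bootStep G r (bootSeq G r A t)

/-- `A` is closed under the `r`-neighbour bootstrap rule. -/
def BootClosed (G : SimpleGraph V) (r : ℕ) (A : Finset V) : Prop :=
  ∀ v, r ≤ nbrsIn G A v → v ∈ A

/-- The `r`-neighbour bootstrap closure `⟨A⟩_r`: the smallest closed superset of `A`. -/
def bootClosure [Fintype V] (G : SimpleGraph V) (r : ℕ) (A : Finset V) : Finset V :=
  Finset.univ.filter (fun v => ∀ B : Finset V, A ⊆ B → BootClosed G r B → v ∈ B)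

/-- `m(G, r)`: the minimum size of a percolating set. -/
def minPerc [Fintype V] (G : SimpleGraph V) (r : ℕ) : ℕ :=
  sInf {k | ∃ A : Finset V, A.card = k ∧ bootClosure G r A = Finset.univ}

end

/-- Two cliques of size `n/2` (the lower and upper halves of `Fin n`) joined by the
perfect matching `i ↔ i + n/2`. -/
def matchGraph (n : ℕ) : SimpleGraph (Fin n) where
  Adj i j := i ≠ j ∧ (((i : ℕ) < n / 2 ↔ (j : ℕ) < n / 2) ∨
    (j : ℕ) = (i : ℕ) + n / 2 ∨ (i : ℕ) = (j : ℕ) + n / 2)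
  symm := by
    constructor
    intro i j h
    exact ⟨h.1.symm, by tauto⟩
  loopless := by
    constructor
    intro i h
    exact h.1 rfl

section Bootstrap

variable {V : Type*} {G : SimpleGraph V} {r : ℕ}

lemma nbrsIn_union_le [DecidableEq V] (s t : Finset V) (v : V) :
    nbrsIn G (s ∪ t) v ≤ nbrsIn G s v + nbrsIn G t v := by
  unfold nbrsIn
  rw [filter_union]
  exact card_union_le _ _

lemma nbrsIn_le_card (s : Finset V) (v : V) : nbrsIn G s v ≤ s.card :=
  card_filter_le _ _

variable [Fintype V]

lemma subset_bootClosure (A : Finset V) : A ⊆ bootClosure G r A :=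
  fun v hv => mem_filter.mpr ⟨mem_univ v, fun _ hAB _ => hAB hv⟩

lemma bootClosure_subset_of_bootClosed {A B : Finset V} (hAB : A ⊆ B)
    (hB : BootClosed G r B) : bootClosure G r A ⊆ B :=
  fun _ hv => (mem_filter.mp hv).2 B hAB hB

lemma lt_minPerc {k : ℕ} (h : ∀ A : Finset V, bootClosure G r A = univ → k < A.card) :
    k < minPerc G r := by
  have hne : {k | ∃ A : Finset V, A.card = k ∧ bootClosure G r A = univ}.Nonempty :=
    ⟨_, univ, rfl, univ_subset_iff.mp (subset_bootClosure univ)⟩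
  obtain ⟨A, hA, hperc⟩ := Nat.sInf_mem hne
  rw [minPerc, ← hA]
  exact h A hperc

lemma bootClosed_compl_union [DecidableEq V] {H A : Finset V}
    (hH : ∀ v ∈ H, nbrsIn G Hᶜ v + (A ∩ H).card < r) : BootClosed G r (Hᶜ ∪ A) := by
  intro v hv
  by_contra hvB
  have hvH : v ∈ H := by simpa using (not_or.mp (mem_union.not.mp hvB)).1
  have hsplit : Hᶜ ∪ A = Hᶜ ∪ (A ∩ H) := by
    ext u
    by_cases u ∈ H <;> simp [*]
  have := (nbrsIn_union_le (G := G) Hᶜ (A ∩ H) v).trans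
    (Nat.add_le_add_left (nbrsIn_le_card _ v) _)
  have := hH v hvH
  rw [hsplit] at hv
  omega

lemma bootClosure_ne_univ_of_compl_union [DecidableEq V] {H A : Finset V}
    (hH : ∀ v ∈ H, nbrsIn G Hᶜ v + (A ∩ H).card < r) (hA : (A ∩ H).card < H.card) :
    bootClosure G r A ≠ univ := by
  obtain ⟨v, hvH, hvA⟩ : ∃ v ∈ H, v ∉ A := by
    by_contra! h
    exact hA.not_ge (card_le_card fun v hv => mem_inter.mpr ⟨h v hv, hv⟩)
  intro hperc
  have := bootClosure_subset_of_bootClosed subset_union_right (bootClosed_compl_union hH)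
    (hperc ▸ mem_univ v)
  simp [hvH, hvA] at this

end Bootstrap

section MatchGraph

variable {n : ℕ}

lemma matchGraph_adj {i j : Fin n} :
    (matchGraph n).Adj i j ↔ i ≠ j ∧ (((i : ℕ) < n / 2 ↔ (j : ℕ) < n / 2) ∨
      (j : ℕ) = (i : ℕ) + n / 2 ∨ (i : ℕ) = (j : ℕ) + n / 2) := Iff.rfl

def lowerHalf (n : ℕ) : Finset (Fin n) := univ.filter fun j => (j : ℕ) < n / 2

lemma card_lowerHalf : (lowerHalf n).card = n / 2 := by
  simp only [lowerHalf, Fin.card_filter_val_lt]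
  omega

lemma card_compl_lowerHalf : (lowerHalf n)ᶜ.card = n - n / 2 := by
  rw [card_compl, Fintype.card_fin, card_lowerHalf]

lemma nbrsIn_compl_le_one {H : Finset (Fin n)} (hH : H = lowerHalf n ∨ H = (lowerHalf n)ᶜ)
    {v : Fin n} (hv : v ∈ H) : nbrsIn (matchGraph n) Hᶜ v ≤ 1 := by
  refine card_le_one.mpr fun u hu w hw => ?_
  simp only [mem_filter, matchGraph_adj] at hu hw
  rcases hH with rfl | rfl <;>
    simp only [lowerHalf, mem_compl, mem_filter, mem_univ, true_and, not_not, ne_eq,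
      Fin.ext_iff] at * <;> omega

def partner (he : Even n) (v : Fin n) : Fin n :=
  ⟨if (v : ℕ) < n / 2 then v + n / 2 else v - n / 2, by
    obtain ⟨k, rfl⟩ := he
    split_ifs <;> omega⟩

lemma neighborFinset_matchGraph (he : Even n) (v : Fin n) :
    (matchGraph n).neighborFinset v = insert (partner he v)
      ((univ.filter fun j : Fin n => ((j : ℕ) < n / 2 ↔ (v : ℕ) < n / 2)).erase v) := by
  obtain ⟨k, rfl⟩ := he
  ext j
  simp only [SimpleGraph.mem_neighborFinset, matchGraph_adj, mem_insert, mem_erase, mem_filter,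
    mem_univ, true_and, ne_eq, Fin.ext_iff, partner]
  split_ifs <;> omega

lemma matchGraph_isRegularOfDegree (he : Even n) : (matchGraph n).IsRegularOfDegree (n / 2) := by
  intro v
  have hsame : (univ.filter fun j : Fin n => ((j : ℕ) < n / 2 ↔ (v : ℕ) < n / 2)).card
      = n / 2 := by
    by_cases hv : (v : ℕ) < n / 2
    · convert card_lowerHalf (n := n) using 2
      ext j
      simp [lowerHalf, hv]
    · convert card_compl_lowerHalf (n := n) using 2
      · ext j
        simp [lowerHalf, hv]
      · have := Nat.even_iff.mp he
        omega
  rw [SimpleGraph.degree, neighborFinset_matchGraph he, card_insert_of_notMem, card_erase_of_mem]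
  · have := hsame ▸ (card_pos.mpr ⟨v, mem_filter.mpr ⟨mem_univ v, Iff.rfl⟩⟩)
    omega
  · simp
  · obtain ⟨k, rfl⟩ := he
    simp only [mem_erase, mem_filter, mem_univ, true_and, ne_eq, Fin.ext_iff, partner]
    split_ifs <;> omega

lemma matchGraph_bootClosure_ne_univ (hn : 4 ≤ n) {A : Finset (Fin n)}
    (hA : A.card ≤ 3) : bootClosure (matchGraph n) 3 A ≠ univ := by
  obtain ⟨H, hH, hAH⟩ :
      ∃ H, (H = lowerHalf n ∨ H = (lowerHalf n)ᶜ) ∧ (A ∩ H).card ≤ 1 := by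
    have := card_inter_add_card_sdiff A (lowerHalf n)
    rw [sdiff_eq_inter_compl] at this
    by_cases hlow : (A ∩ lowerHalf n).card ≤ 1
    · exact ⟨_, .inl rfl, hlow⟩
    · exact ⟨_, .inr rfl, by omega⟩
  have hHcard : 2 ≤ H.card := by
    rcases hH with rfl | rfl
    · rw [card_lowerHalf]; omega
    · rw [card_compl_lowerHalf]; omega
  exact bootClosure_ne_univ_of_compl_union
    (fun v hv => by have := nbrsIn_compl_le_one hH hv; omega) (by omega)

end MatchGraph

theorem stmt_8 (n : ℕ) (hn : 4 ≤ n) (he : Even n) :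
    (matchGraph n).minDegree = n / 2 ∧ 3 < minPerc (matchGraph n) 3 := by
  have : Nonempty (Fin n) := ⟨⟨0, by omega⟩⟩
  refine ⟨(matchGraph_isRegularOfDegree he).minDegree_eq, lt_minPerc fun A hA => ?_⟩
  by_contra! hcard
  exact matchGraph_bootClosure_ne_univ hn hcard hA
end

section
/- Let n ≥ 13 and let G be a graph on n vertices with δ(G) ≥ ⌊n/2⌋ + 1. If there exists A ⊆ V(G) with |A| = ⌊n/2⌋ and ⟨A⟩_3 = A, then G has a percolating set of size 3 in 3-neighbour bootstrap percolation, i.e. m(G, 3) = 3. -/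
open Finset

open scoped Classical

section Aux

variable [Fintype V]

private lemma nbrsIn_mono' (G : SimpleGraph V) {A B : Finset V} (h : A ⊆ B) (v : V) :
    nbrsIn G A v ≤ nbrsIn G B v :=
  Finset.card_le_card (Finset.filter_subset_filter _ h)

private lemma bootClosure_subset' (G : SimpleGraph V) {A C : Finset V}
    (hAC : A ⊆ C) (hC : BootClosed G 3 C) : bootClosure G 3 A ⊆ C := by
  intro v hv
  rw [bootClosure, Finset.mem_filter] at hv
  exact hv.2 C hAC hC

private lemma bootClosure_closed' (G : SimpleGraph V) (A : Finset V) :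
    BootClosed G 3 (bootClosure G 3 A) := by
  intro v hv
  rw [bootClosure, Finset.mem_filter]
  refine ⟨Finset.mem_univ v, fun C hAC hC => ?_⟩
  exact hC v (le_trans hv (nbrsIn_mono' G (bootClosure_subset' G hAC hC) v))

private lemma mem_of_card_le' (G : SimpleGraph V) {C : Finset V} (hC : BootClosed G 3 C)
    (T : Finset V) (hTC : T ⊆ C) {v : V} (hadj : ∀ u ∈ T, G.Adj v u) (h3 : 3 ≤ T.card) :
    v ∈ C := by
  apply hC
  refine le_trans h3 (Finset.card_le_card ?_)
  intro u hu
  exact Finset.mem_filter.mpr ⟨hTC hu, hadj u hu⟩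

private lemma mem_of_three' (G : SimpleGraph V) {C : Finset V} (hC : BootClosed G 3 C)
    {v x y z : V} (hx : x ∈ C) (hy : y ∈ C) (hz : z ∈ C)
    (hxy : x ≠ y) (hxz : x ≠ z) (hyz : y ≠ z)
    (ax : G.Adj v x) (ay : G.Adj v y) (az : G.Adj v z) : v ∈ C := by
  refine mem_of_card_le' G hC {x, y, z} ?_ ?_ ?_
  · intro u hu
    simp only [Finset.mem_insert, Finset.mem_singleton] at hu
    rcases hu with rfl | rfl | rfl <;> assumption
  · intro u hu
    simp only [Finset.mem_insert, Finset.mem_singleton] at hu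
    rcases hu with rfl | rfl | rfl <;> assumption
  · rw [Finset.card_insert_of_notMem (by simp [hxy, hxz]),
      Finset.card_insert_of_notMem (by simp [hyz]), Finset.card_singleton]

end Aux

theorem stmt_10 {V : Type*} [Fintype V] (G : SimpleGraph V) (n : ℕ)
    (hn : Fintype.card V = n) (h13 : 13 ≤ n) (hδ : n / 2 + 1 ≤ G.minDegree)
    (A : Finset V) (hcard : A.card = n / 2) (hclosed : bootClosure G 3 A = A) :
    minPerc G 3 = 3 := by
  classical
  have hAclosed : BootClosed G 3 A := hclosed ▸ bootClosure_closed' G A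
  set B : Finset V := Aᶜ with hBdef
  have hBcard : B.card = n - n / 2 := by
    rw [hBdef, Finset.card_compl, hcard, hn]
  have hBnotA : ∀ b ∈ B, b ∉ A := by
    intro b hb
    rw [hBdef, Finset.mem_compl] at hb
    exact hb
  have hABne : ∀ a ∈ A, ∀ b ∈ B, a ≠ b := by
    intro a ha b hb h
    exact hBnotA b hb (h ▸ ha)
  have hmemAB : ∀ v : V, v ∈ A ∨ v ∈ B := by
    intro v
    by_cases h : v ∈ A
    · exact Or.inl h
    · exact Or.inr (by rw [hBdef, Finset.mem_compl]; exact h)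
  -- degree split
  have hdeg : ∀ v : V, n / 2 + 1 ≤ nbrsIn G A v + nbrsIn G B v := by
    intro v
    have h1 : n / 2 + 1 ≤ G.degree v := le_trans hδ (G.minDegree_le_degree v)
    have h2 : G.degree v = nbrsIn G A v + nbrsIn G B v := by
      rw [← SimpleGraph.card_neighborFinset_eq_degree]
      have hnb : G.neighborFinset v = Finset.univ.filter (fun u => G.Adj v u) := by
        ext u; simp [SimpleGraph.mem_neighborFinset]
      rw [hnb]
      unfold nbrsIn
      rw [← Finset.card_union_of_disjoint
        (Finset.disjoint_filter_filter (by rw [hBdef]; exact disjoint_compl_right)),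
        ← Finset.filter_union, hBdef, Finset.union_compl]
    omega
  have hself : ∀ (S : Finset V) (v : V), v ∈ S → nbrsIn G S v ≤ S.card - 1 := by
    intro S v hv
    have hs : S.filter (fun u => G.Adj v u) ⊆ S.erase v := by
      intro u hu
      rw [Finset.mem_filter] at hu
      exact Finset.mem_erase.mpr ⟨(G.ne_of_adj hu.2).symm, hu.1⟩
    calc nbrsIn G S v ≤ (S.erase v).card := Finset.card_le_card hs
      _ = S.card - 1 := Finset.card_erase_of_mem hv
  have hdAle : ∀ b ∈ B, nbrsIn G A b ≤ 2 := by
    intro b hb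
    by_contra h
    exact hBnotA b hb (hAclosed b (by omega))
  have hdBge : ∀ a ∈ A, 2 ≤ nbrsIn G B a := by
    intro a ha
    have h1 := hself A a ha
    have h2 := hdeg a
    omega
  have hdAge : ∀ b ∈ B, 1 ≤ nbrsIn G A b := by
    intro b hb
    have h1 := hself B b hb
    have h2 := hdeg b
    omega
  -- non-neighbour sets in B
  have hnN : ∀ x ∈ B, ((B.erase x).filter (fun y => ¬ G.Adj x y)).card ≤ 1 := by
    intro x hx
    have h2 : (B.erase x).filter (fun y => G.Adj x y) = B.filter (fun y => G.Adj x y) := by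
      ext y
      simp only [Finset.mem_filter, Finset.mem_erase]
      exact ⟨fun h => ⟨h.1.2, h.2⟩, fun h => ⟨⟨(G.ne_of_adj h.2).symm, h.1⟩, h.2⟩⟩
    have h5 : ((B.erase x).filter (fun y => ¬ G.Adj x y)).card
        = (B.erase x).card - (B.filter (fun y => G.Adj x y)).card := by
      rw [Finset.filter_not, Finset.card_sdiff_of_subset (Finset.filter_subset _ _), h2]
    have h6 : (B.erase x).card = B.card - 1 := Finset.card_erase_of_mem hx
    have h7 : nbrsIn G B x = (B.filter (fun y => G.Adj x y)).card := rfl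
    have h3 := hdeg x
    have h4 := hdAle x hx
    omega
  have hadjB : ∀ x ∈ B, ∀ y ∈ B, y ≠ x →
      y ∉ (B.erase x).filter (fun u => ¬ G.Adj x u) → G.Adj x y := by
    intro x hx y hy hyx hyn
    by_contra h
    exact hyn (Finset.mem_filter.mpr ⟨Finset.mem_erase.mpr ⟨hyx, hy⟩, h⟩)
  -- A-completeness for vertices with few B-neighbours
  have hcompl : ∀ a ∈ A, nbrsIn G B a ≤ 2 → ∀ a' ∈ A, a' ≠ a → G.Adj a a' := by
    intro a ha h2 a' ha' hne
    have hsub : A.filter (fun u => G.Adj a u) ⊆ A.erase a := by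
      intro u hu
      rw [Finset.mem_filter] at hu
      exact Finset.mem_erase.mpr ⟨(G.ne_of_adj hu.2).symm, hu.1⟩
    have hd := hdeg a
    have heq : A.filter (fun u => G.Adj a u) = A.erase a := by
      refine Finset.eq_of_subset_of_card_le hsub ?_
      rw [Finset.card_erase_of_mem ha]
      have h7 : nbrsIn G A a = (A.filter (fun u => G.Adj a u)).card := rfl
      omega
    have : a' ∈ A.filter (fun u => G.Adj a u) := by
      rw [heq]
      exact Finset.mem_erase.mpr ⟨hne, ha'⟩
    exact (Finset.mem_filter.mp this).2
  -- from 3 infected vertices in B, all of B gets infected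
  have fullB : ∀ C : Finset V, BootClosed G 3 C → ∀ x y z : V, x ∈ B → y ∈ B → z ∈ B →
      x ≠ y → x ≠ z → y ≠ z → x ∈ C → y ∈ C → z ∈ C → ∀ b ∈ B, b ∈ C := by
    intro C hC x y z hxB hyB hzB hxy hxz hyz hxC hyC hzC
    -- find a fourth vertex w adjacent to x, y, z
    have hcx := hnN x hxB
    have hcy := hnN y hyB
    have hcz := hnN z hzB
    have hxyzcard : ({x, y, z} : Finset V).card ≤ 3 := by
      have h1 := Finset.card_insert_le x ({y, z} : Finset V)
      have h2 := Finset.card_insert_le y ({z} : Finset V)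
      have h3 : ({z} : Finset V).card = 1 := Finset.card_singleton z
      omega
    have hTle : (({x, y, z} : Finset V) ∪ (B.erase x).filter (fun u => ¬ G.Adj x u)
        ∪ (B.erase y).filter (fun u => ¬ G.Adj y u)
        ∪ (B.erase z).filter (fun u => ¬ G.Adj z u)).card ≤ 6 := by
      have u1 := Finset.card_union_le (({x, y, z} : Finset V))
        ((B.erase x).filter (fun u => ¬ G.Adj x u))
      have u2 := Finset.card_union_le (({x, y, z} : Finset V)
        ∪ (B.erase x).filter (fun u => ¬ G.Adj x u))
        ((B.erase y).filter (fun u => ¬ G.Adj y u))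
      have u3 := Finset.card_union_le (({x, y, z} : Finset V)
        ∪ (B.erase x).filter (fun u => ¬ G.Adj x u)
        ∪ (B.erase y).filter (fun u => ¬ G.Adj y u))
        ((B.erase z).filter (fun u => ¬ G.Adj z u))
      omega
    have hwex : (B \ (({x, y, z} : Finset V) ∪ (B.erase x).filter (fun u => ¬ G.Adj x u)
        ∪ (B.erase y).filter (fun u => ¬ G.Adj y u)
        ∪ (B.erase z).filter (fun u => ¬ G.Adj z u))).Nonempty := by
      have h1 := Finset.le_card_sdiff (({x, y, z} : Finset V)
        ∪ (B.erase x).filter (fun u => ¬ G.Adj x u)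
        ∪ (B.erase y).filter (fun u => ¬ G.Adj y u)
        ∪ (B.erase z).filter (fun u => ¬ G.Adj z u)) B
      rw [← Finset.card_pos]
      omega
    obtain ⟨w, hw⟩ := hwex
    rw [Finset.mem_sdiff] at hw
    obtain ⟨hwB, hwT⟩ := hw
    simp only [Finset.mem_union, not_or] at hwT
    obtain ⟨⟨⟨hw0, hw1⟩, hw2⟩, hw3⟩ := hwT
    simp only [Finset.mem_insert, Finset.mem_singleton, not_or] at hw0
    obtain ⟨hwx, hwy, hwz⟩ := hw0
    have haxw : G.Adj x w := hadjB x hxB w hwB hwx hw1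
    have hayw : G.Adj y w := hadjB y hyB w hwB hwy hw2
    have hazw : G.Adj z w := hadjB z hzB w hwB hwz hw3
    have hwC : w ∈ C :=
      mem_of_three' G hC hxC hyC hzC hxy hxz hyz haxw.symm hayw.symm hazw.symm
    -- now every vertex of B has ≥ 3 neighbours among {x, y, z, w}
    intro b hbB
    by_cases hb4 : b = x ∨ b = y ∨ b = z ∨ b = w
    · rcases hb4 with rfl | rfl | rfl | rfl <;> assumption
    push_neg at hb4
    obtain ⟨hbx, hby, hbz, hbw⟩ := hb4
    have hQcard : ({x, y, z, w} : Finset V).card = 4 := by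
      rw [Finset.card_insert_of_notMem (by simp [hxy, hxz, Ne.symm hwx]),
        Finset.card_insert_of_notMem (by simp [hyz, Ne.symm hwy]),
        Finset.card_insert_of_notMem (by simp [Ne.symm hwz]), Finset.card_singleton]
    have hsub2 : ({x, y, z, w} : Finset V).filter (fun u => ¬ G.Adj b u)
        ⊆ (B.erase b).filter (fun u => ¬ G.Adj b u) := by
      intro u hu
      rw [Finset.mem_filter] at hu ⊢
      refine ⟨Finset.mem_erase.mpr ⟨?_, ?_⟩, hu.2⟩
      · simp only [Finset.mem_insert, Finset.mem_singleton] at hu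
        rcases hu.1 with rfl | rfl | rfl | rfl
        · exact fun h => hbx h.symm
        · exact fun h => hby h.symm
        · exact fun h => hbz h.symm
        · exact fun h => hbw h.symm
      · simp only [Finset.mem_insert, Finset.mem_singleton] at hu
        rcases hu.1 with rfl | rfl | rfl | rfl <;> assumption
    have hneg : (({x, y, z, w} : Finset V).filter (fun u => ¬ G.Adj b u)).card ≤ 1 :=
      le_trans (Finset.card_le_card hsub2) (hnN b hbB)
    have hposneg : (({x, y, z, w} : Finset V).filter (fun u => G.Adj b u)).card
        + (({x, y, z, w} : Finset V).filter (fun u => ¬ G.Adj b u)).card = 4 := by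
      rw [Finset.card_filter_add_card_filter_not, hQcard]
    refine mem_of_card_le' G hC (({x, y, z, w} : Finset V).filter (fun u => G.Adj b u))
      ?_ (fun u hu => (Finset.mem_filter.mp hu).2) (by omega)
    intro u hu
    have := (Finset.mem_filter.mp hu).1
    simp only [Finset.mem_insert, Finset.mem_singleton] at this
    rcases this with rfl | rfl | rfl | rfl <;> assumption
  -- once B is infected and one vertex of A is infected, everything is infected
  have fullA : ∀ C : Finset V, BootClosed G 3 C → (∀ b ∈ B, b ∈ C) →
      ∀ a0 ∈ A, a0 ∈ C → ∀ a ∈ A, a ∈ C := by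
    intro C hC hBC a0 ha0A ha0C a haA
    by_cases haa0 : a = a0
    · exact haa0 ▸ ha0C
    by_cases h3 : 3 ≤ nbrsIn G B a
    · exact mem_of_card_le' G hC (B.filter (fun u => G.Adj a u))
        (fun u hu => hBC u (Finset.mem_filter.mp hu).1)
        (fun u hu => (Finset.mem_filter.mp hu).2) h3
    · push_neg at h3
      have hadj0 : G.Adj a a0 := hcompl a haA (by omega) a0 ha0A (Ne.symm haa0)
      refine mem_of_card_le' G hC (insert a0 (B.filter (fun u => G.Adj a u))) ?_ ?_ ?_
      · intro u hu
        rcases Finset.mem_insert.mp hu with rfl | hu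
        · exact ha0C
        · exact hBC u (Finset.mem_filter.mp hu).1
      · intro u hu
        rcases Finset.mem_insert.mp hu with rfl | hu
        · exact hadj0
        · exact (Finset.mem_filter.mp hu).2
      · have hnm : a0 ∉ B.filter (fun u => G.Adj a u) := by
          intro h
          exact hBnotA a0 (Finset.mem_filter.mp h).1 ha0A
        rw [Finset.card_insert_of_notMem hnm]
        have h2 := hdBge a haA
        have h7 : nbrsIn G B a = (B.filter (fun u => G.Adj a u)).card := rfl
        omega
  -- wrapper producing percolation
  have mk : ∀ S : Finset V, (∀ C : Finset V, S ⊆ C → BootClosed G 3 C → ∀ v, v ∈ C) →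
      bootClosure G 3 S = Finset.univ := by
    intro S h
    apply Finset.eq_univ_iff_forall.mpr
    intro v
    rw [bootClosure, Finset.mem_filter]
    exact ⟨Finset.mem_univ v, fun C hSC hC => h C hSC hC v⟩
  -- produce a percolating set of size 3
  have hperc3 : ∃ S : Finset V, S.card = 3 ∧ bootClosure G 3 S = Finset.univ := by
    by_cases hcase : ∃ a ∈ A, 3 ≤ nbrsIn G B a
    · -- easy case: seed = any 3 vertices of B
      obtain ⟨a0, ha0A, ha03⟩ := hcase
      have h3B : 3 ≤ B.card := by omega
      obtain ⟨T0, hT0B, hT03⟩ := Finset.exists_subset_card_eq h3B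
      obtain ⟨x, y, z, hxy, hxz, hyz, rfl⟩ := Finset.card_eq_three.mp hT03
      have hxB : x ∈ B := hT0B (by simp)
      have hyB : y ∈ B := hT0B (by simp)
      have hzB : z ∈ B := hT0B (by simp)
      refine ⟨{x, y, z}, hT03, mk _ ?_⟩
      intro C hSC hC v
      have hxC : x ∈ C := hSC (by simp)
      have hyC : y ∈ C := hSC (by simp)
      have hzC : z ∈ C := hSC (by simp)
      have hBC := fullB C hC x y z hxB hyB hzB hxy hxz hyz hxC hyC hzC
      have ha0C : a0 ∈ C := mem_of_card_le' G hC (B.filter (fun u => G.Adj a0 u))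
        (fun u hu => hBC u (Finset.mem_filter.mp hu).1)
        (fun u hu => (Finset.mem_filter.mp hu).2) ha03
      rcases hmemAB v with hv | hv
      · exact fullA C hC hBC a0 ha0A ha0C v hv
      · exact hBC v hv
    · -- hard case: every vertex of A has exactly 2 neighbours in B, A is complete
      push_neg at hcase
      have hcompl2 : ∀ a ∈ A, ∀ a' ∈ A, a' ≠ a → G.Adj a a' := by
        intro a ha
        exact hcompl a ha (by have := hcase a ha; omega)
      -- there are at least 3 vertices in B with 2 neighbours in A
      have hPcard : 3 ≤ (B.filter (fun b => 2 ≤ nbrsIn G A b)).card := by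
        have hs1 : ∑ b ∈ B, nbrsIn G A b = ∑ a ∈ A, nbrsIn G B a := by
          unfold nbrsIn
          simp only [Finset.card_filter]
          rw [Finset.sum_comm]
          refine Finset.sum_congr rfl fun a _ => Finset.sum_congr rfl fun b _ => ?_
          simp [SimpleGraph.adj_comm]
        have hs2 : A.card * 2 ≤ ∑ a ∈ A, nbrsIn G B a := by
          have := Finset.card_nsmul_le_sum A (fun a => nbrsIn G B a) 2 hdBge
          simpa [smul_eq_mul] using this
        have hsplit := Finset.sum_filter_add_sum_filter_not B
          (fun b => 2 ≤ nbrsIn G A b) (fun b => nbrsIn G A b)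
        have hup1 : ∑ b ∈ B.filter (fun b => 2 ≤ nbrsIn G A b), nbrsIn G A b
            ≤ (B.filter (fun b => 2 ≤ nbrsIn G A b)).card * 2 := by
          have := Finset.sum_le_card_nsmul (B.filter (fun b => 2 ≤ nbrsIn G A b))
            (fun b => nbrsIn G A b) 2
            (fun b hb => hdAle b (Finset.mem_filter.mp hb).1)
          simpa [smul_eq_mul] using this
        have hup2 : ∑ b ∈ B.filter (fun b => ¬ 2 ≤ nbrsIn G A b), nbrsIn G A b
            ≤ (B.filter (fun b => ¬ 2 ≤ nbrsIn G A b)).card * 1 := by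
          have := Finset.sum_le_card_nsmul (B.filter (fun b => ¬ 2 ≤ nbrsIn G A b))
            (fun b => nbrsIn G A b) 1
            (fun b hb => by
              have h := (Finset.mem_filter.mp hb).2
              show nbrsIn G A b ≤ 1
              omega)
          simpa [smul_eq_mul] using this
        have hcards : (B.filter (fun b => 2 ≤ nbrsIn G A b)).card
            + (B.filter (fun b => ¬ 2 ≤ nbrsIn G A b)).card = B.card :=
          Finset.card_filter_add_card_filter_not _
        omega
      -- helper to find a vertex d in B adjacent to two given vertices of B
      have hfindd : ∀ b1 ∈ B, ∀ b2 ∈ B, ∃ d ∈ B, d ≠ b1 ∧ d ≠ b2 ∧ G.Adj b1 d ∧ G.Adj b2 d := by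
        intro b1 hb1B b2 hb2B
        have hc1 := hnN b1 hb1B
        have hc2 := hnN b2 hb2B
        have hp : ({b1, b2} : Finset V).card ≤ 2 := by
          have h1 := Finset.card_insert_le b1 ({b2} : Finset V)
          have h3 : ({b2} : Finset V).card = 1 := Finset.card_singleton b2
          omega
        have u1 := Finset.card_union_le (({b1, b2} : Finset V))
          ((B.erase b1).filter (fun u => ¬ G.Adj b1 u))
        have u2 := Finset.card_union_le (({b1, b2} : Finset V)
          ∪ (B.erase b1).filter (fun u => ¬ G.Adj b1 u))
          ((B.erase b2).filter (fun u => ¬ G.Adj b2 u))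
        have hdd : (B \ (({b1, b2} : Finset V) ∪ (B.erase b1).filter (fun u => ¬ G.Adj b1 u)
            ∪ (B.erase b2).filter (fun u => ¬ G.Adj b2 u))).Nonempty := by
          have h1 := Finset.le_card_sdiff (({b1, b2} : Finset V)
            ∪ (B.erase b1).filter (fun u => ¬ G.Adj b1 u)
            ∪ (B.erase b2).filter (fun u => ¬ G.Adj b2 u)) B
          rw [← Finset.card_pos]
          omega
        obtain ⟨d, hd⟩ := hdd
        rw [Finset.mem_sdiff] at hd
        obtain ⟨hdB, hdT⟩ := hd
        simp only [Finset.mem_union, not_or] at hdT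
        obtain ⟨⟨hd0, hd1⟩, hd2⟩ := hdT
        simp only [Finset.mem_insert, Finset.mem_singleton, not_or] at hd0
        exact ⟨d, hdB, hd0.1, hd0.2, hadjB b1 hb1B d hdB hd0.1 hd1,
          hadjB b2 hb2B d hdB hd0.2 hd2⟩
      -- pair extraction: a special vertex's A-neighbourhood is a pair
      have hpair : ∀ b ∈ B, 2 ≤ nbrsIn G A b → ∃ a0 a1, a0 ≠ a1 ∧
          A.filter (fun u => G.Adj b u) = {a0, a1} := by
        intro b hbB h2
        have hle := hdAle b hbB
        have : (A.filter (fun u => G.Adj b u)).card = 2 := le_antisymm hle h2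
        obtain ⟨a0, a1, hne, heq⟩ := Finset.card_eq_two.mp this
        exact ⟨a0, a1, hne, heq⟩
      by_cases hsame : ∃ b1 ∈ B.filter (fun b => 2 ≤ nbrsIn G A b),
          ∃ b2 ∈ B.filter (fun b => 2 ≤ nbrsIn G A b), b1 ≠ b2 ∧
          A.filter (fun u => G.Adj b1 u) = A.filter (fun u => G.Adj b2 u)
      · -- two special vertices with the same A-pair {a0, a1}: seed {a0, a1, d}
        obtain ⟨b1, hb1P, b2, hb2P, hne12, heq⟩ := hsame
        have hb1B := (Finset.mem_filter.mp hb1P).1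
        have hb2B := (Finset.mem_filter.mp hb2P).1
        obtain ⟨a0, a1, hne01, hQeq⟩ := hpair b1 hb1B (Finset.mem_filter.mp hb1P).2
        have ha0Q : a0 ∈ A.filter (fun u => G.Adj b1 u) := by rw [hQeq]; simp
        have ha1Q : a1 ∈ A.filter (fun u => G.Adj b1 u) := by rw [hQeq]; simp
        have ha0A := (Finset.mem_filter.mp ha0Q).1
        have ha1A := (Finset.mem_filter.mp ha1Q).1
        have hadj10 : G.Adj b1 a0 := (Finset.mem_filter.mp ha0Q).2
        have hadj11 : G.Adj b1 a1 := (Finset.mem_filter.mp ha1Q).2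
        have hadj20 : G.Adj b2 a0 := (Finset.mem_filter.mp (heq ▸ ha0Q)).2
        have hadj21 : G.Adj b2 a1 := (Finset.mem_filter.mp (heq ▸ ha1Q)).2
        obtain ⟨d, hdB, hdb1, hdb2, hadj1d, hadj2d⟩ := hfindd b1 hb1B b2 hb2B
        have ha0d : a0 ≠ d := hABne a0 ha0A d hdB
        have ha1d : a1 ≠ d := hABne a1 ha1A d hdB
        refine ⟨{a0, a1, d}, ?_, mk _ ?_⟩
        · rw [Finset.card_insert_of_notMem (by simp [hne01, ha0d]),
            Finset.card_insert_of_notMem (by simp [ha1d]), Finset.card_singleton]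
        intro C hSC hC v
        have ha0C : a0 ∈ C := hSC (by simp)
        have ha1C : a1 ∈ C := hSC (by simp)
        have hdC : d ∈ C := hSC (by simp)
        have hb1C : b1 ∈ C :=
          mem_of_three' G hC ha0C ha1C hdC hne01 ha0d ha1d hadj10 hadj11 hadj1d
        have hb2C : b2 ∈ C :=
          mem_of_three' G hC ha0C ha1C hdC hne01 ha0d ha1d hadj20 hadj21 hadj2d
        have hBC := fullB C hC b1 b2 d hb1B hb2B hdB hne12 (Ne.symm hdb1) (Ne.symm hdb2)
          hb1C hb2C hdC
        rcases hmemAB v with hv | hv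
        · exact fullA C hC hBC a0 ha0A ha0C v hv
        · exact hBC v hv
      · -- all special vertices have distinct A-pairs
        push_neg at hsame
        obtain ⟨b1, hb1P⟩ := Finset.card_pos.mp (by omega :
          0 < (B.filter (fun b => 2 ≤ nbrsIn G A b)).card)
        have hb1B := (Finset.mem_filter.mp hb1P).1
        -- find b2 special, distinct from b1, adjacent to b1
        have hc1 := hnN b1 hb1B
        have hb2ex : ((B.filter (fun b => 2 ≤ nbrsIn G A b))
            \ insert b1 ((B.erase b1).filter (fun u => ¬ G.Adj b1 u))).Nonempty := by
          have hin := Finset.card_insert_le b1 ((B.erase b1).filter (fun u => ¬ G.Adj b1 u))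
          have h1 := Finset.le_card_sdiff
            (insert b1 ((B.erase b1).filter (fun u => ¬ G.Adj b1 u)))
            (B.filter (fun b => 2 ≤ nbrsIn G A b))
          rw [← Finset.card_pos]
          omega
        obtain ⟨b2, hb2⟩ := hb2ex
        rw [Finset.mem_sdiff, Finset.mem_insert, not_or] at hb2
        obtain ⟨hb2P, hb2b1, hb2n⟩ := hb2
        have hb2B := (Finset.mem_filter.mp hb2P).1
        have hadj12 : G.Adj b1 b2 := hadjB b1 hb1B b2 hb2B hb2b1 hb2n
        have hne12 : b1 ≠ b2 := Ne.symm hb2b1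
        obtain ⟨a0, a1, hne01, hQ1eq⟩ := hpair b1 hb1B (Finset.mem_filter.mp hb1P).2
        have ha0Q : a0 ∈ A.filter (fun u => G.Adj b1 u) := by rw [hQ1eq]; simp
        have ha1Q : a1 ∈ A.filter (fun u => G.Adj b1 u) := by rw [hQ1eq]; simp
        have ha0A := (Finset.mem_filter.mp ha0Q).1
        have ha1A := (Finset.mem_filter.mp ha1Q).1
        have hadj10 : G.Adj b1 a0 := (Finset.mem_filter.mp ha0Q).2
        have hadj11 : G.Adj b1 a1 := (Finset.mem_filter.mp ha1Q).2
        -- the pair of b2 differs from that of b1, get a2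
        have hQne : A.filter (fun u => G.Adj b1 u) ≠ A.filter (fun u => G.Adj b2 u) :=
          hsame b1 hb1P b2 hb2P hne12
        have hc2card : (A.filter (fun u => G.Adj b2 u)).card = 2 :=
          le_antisymm (hdAle b2 hb2B) (Finset.mem_filter.mp hb2P).2
        have hc1card : (A.filter (fun u => G.Adj b1 u)).card = 2 :=
          le_antisymm (hdAle b1 hb1B) (Finset.mem_filter.mp hb1P).2
        have hnsub : ¬ (A.filter (fun u => G.Adj b2 u) ⊆ A.filter (fun u => G.Adj b1 u)) := by
          intro h
          exact hQne (Finset.eq_of_subset_of_card_le h (by omega)).symm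
        obtain ⟨a2, ha2Q2, ha2nQ1⟩ := Finset.not_subset.mp hnsub
        have ha2A := (Finset.mem_filter.mp ha2Q2).1
        have hadj2a2 : G.Adj b2 a2 := (Finset.mem_filter.mp ha2Q2).2
        have ha2a0 : a2 ≠ a0 := fun h => ha2nQ1 (h ▸ ha0Q)
        have ha2a1 : a2 ≠ a1 := fun h => ha2nQ1 (h ▸ ha1Q)
        have ha0b2 : a0 ≠ b2 := hABne a0 ha0A b2 hb2B
        have ha1b2 : a1 ≠ b2 := hABne a1 ha1A b2 hb2B
        refine ⟨{a0, a1, b2}, ?_, mk _ ?_⟩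
        · rw [Finset.card_insert_of_notMem (by simp [hne01, ha0b2]),
            Finset.card_insert_of_notMem (by simp [ha1b2]), Finset.card_singleton]
        intro C hSC hC v
        have ha0C : a0 ∈ C := hSC (by simp)
        have ha1C : a1 ∈ C := hSC (by simp)
        have hb2C : b2 ∈ C := hSC (by simp)
        have hb1C : b1 ∈ C :=
          mem_of_three' G hC ha0C ha1C hb2C hne01 ha0b2 ha1b2 hadj10 hadj11 hadj12
        have ha2C : a2 ∈ C := by
          refine mem_of_three' G hC ha0C ha1C hb2C hne01 ha0b2 ha1b2 ?_ ?_ hadj2a2.symm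
          · exact hcompl2 a2 ha2A a0 ha0A (Ne.symm ha2a0)
          · exact hcompl2 a2 ha2A a1 ha1A (Ne.symm ha2a1)
        -- all of A is infected
        have hAC : ∀ a ∈ A, a ∈ C := by
          intro a haA
          by_cases h0 : a = a0
          · exact h0 ▸ ha0C
          by_cases h1 : a = a1
          · exact h1 ▸ ha1C
          by_cases h2 : a = a2
          · exact h2 ▸ ha2C
          refine mem_of_three' G hC ha0C ha1C ha2C hne01 (Ne.symm ha2a0) (Ne.symm ha2a1)
            ?_ ?_ ?_
          · exact hcompl2 a haA a0 ha0A (fun h => h0 h.symm)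
          · exact hcompl2 a haA a1 ha1A (fun h => h1 h.symm)
          · exact hcompl2 a haA a2 ha2A (fun h => h2 h.symm)
        -- get a third vertex of B infected
        obtain ⟨d, hdB, hdb1, hdb2, hadj1d, hadj2d⟩ := hfindd b1 hb1B b2 hb2B
        obtain ⟨a', ha'⟩ : (A.filter (fun u => G.Adj d u)).Nonempty := by
          rw [← Finset.card_pos]
          have := hdAge d hdB
          have h7 : nbrsIn G A d = (A.filter (fun u => G.Adj d u)).card := rfl
          omega
        have ha'A := (Finset.mem_filter.mp ha').1
        have hadjda' : G.Adj d a' := (Finset.mem_filter.mp ha').2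
        have hdC : d ∈ C := by
          refine mem_of_three' G hC hb1C hb2C (hAC a' ha'A) hne12
            (Ne.symm (hABne a' ha'A b1 hb1B)) (Ne.symm (hABne a' ha'A b2 hb2B))
            hadj1d.symm hadj2d.symm hadjda'
        have hBC := fullB C hC b1 b2 d hb1B hb2B hdB hne12 (Ne.symm hdb1) (Ne.symm hdb2)
          hb1C hb2C hdC
        rcases hmemAB v with hv | hv
        · exact hAC v hv
        · exact hBC v hv
  -- conclude
  obtain ⟨S, hS3, hSuniv⟩ := hperc3
  have hmem : 3 ∈ {k | ∃ A : Finset V, A.card = k ∧ bootClosure G 3 A = Finset.univ} :=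
    ⟨S, hS3, hSuniv⟩
  have hlb : ∀ k ∈ {k | ∃ A : Finset V, A.card = k ∧ bootClosure G 3 A = Finset.univ},
      3 ≤ k := by
    intro k hk
    obtain ⟨T, hTk, hTuniv⟩ := hk
    by_contra hlt
    push_neg at hlt
    have hTclosed : BootClosed G 3 T := by
      intro v hv
      exfalso
      have h1 : nbrsIn G T v ≤ T.card := Finset.card_le_card (Finset.filter_subset _ _)
      omega
    have hsub : bootClosure G 3 T ⊆ T := bootClosure_subset' G (Finset.Subset.refl T) hTclosed
    rw [hTuniv] at hsub
    have h2 := Finset.card_le_card hsub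
    rw [Finset.card_univ, hn] at h2
    omega
  unfold minPerc
  exact le_antisymm (Nat.sInf_le hmem) (le_csInf ⟨3, hmem⟩ hlb)
end
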